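/- Fix a fixed-design Cox partial likelihood with score U and information matrix J, with covariates bounded by |z_i^j| ≤ K₁ for all i, j. Let β₀ ∈ ℝ^p with support T₀ := {j : β₀ⱼ ≠ 0} of cardinality S ≥ 1, and let β̂ ∈ ℝ^p and γ ≥ 0 satisfy ‖U(β₀)‖_∞ ≤ γ, ‖U(β̂)‖_∞ ≤ γ, and ‖β̂‖₁ ≤ ‖β₀‖₁. If the restricted eigenvalue satisfies RE(T₀; J(β₀)) > 0, then ‖β̂ − β₀‖₂² ≤ 4γ‖β₀‖₁ exp(4K₁‖β₀‖₁) / RE(T₀; J(β₀))². -/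

import Mathlib

open Matrix Finset

noncomputable def l1 {p : ℕ} (h : Fin p → ℝ) : ℝ := ∑ j, |h j|
noncomputable def l2 {p : ℕ} (h : Fin p → ℝ) : ℝ := Real.sqrt (∑ j, (h j) ^ 2)
noncomputable def lqNorm {p : ℕ} (q : ℝ) (h : Fin p → ℝ) : ℝ := (∑ j, |h j| ^ q) ^ (1 / q)
noncomputable def linf {p : ℕ} (h : Fin p → ℝ) : ℝ := ⨆ j, |h j|
def restr {p : ℕ} (T : Finset (Fin p)) (h : Fin p → ℝ) : Fin p → ℝ :=
  fun j => if j ∈ T then h j else 0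
def coneC {p : ℕ} (T : Finset (Fin p)) (h : Fin p → ℝ) : Prop :=
  l1 (restr Tᶜ h) ≤ l1 (restr T h)
noncomputable def quad {p : ℕ} (M : Matrix (Fin p) (Fin p) ℝ) (h : Fin p → ℝ) : ℝ :=
  h ⬝ᵥ M.mulVec h

/-- `S⁰_i(β) = Σ_{k ∈ R_i} exp(z_kᵀβ)` for the fixed-design Cox partial likelihood. -/
noncomputable def coxS0 {n p : ℕ} (z : Fin n → Fin p → ℝ) (R : Fin n → Finset (Fin n))
    (i : Fin n) (β : Fin p → ℝ) : ℝ :=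
  ∑ k ∈ R i, Real.exp (z k ⬝ᵥ β)

/-- The score `U(β) = (1/n) Σ_{i ∈ D} (z_i − S¹_i(β)/S⁰_i(β))`. -/
noncomputable def coxU {n p : ℕ} (z : Fin n → Fin p → ℝ) (D : Finset (Fin n))
    (R : Fin n → Finset (Fin n)) (β : Fin p → ℝ) : Fin p → ℝ :=
  fun j => (n : ℝ)⁻¹ *
    ∑ i ∈ D, (z i j - (∑ k ∈ R i, Real.exp (z k ⬝ᵥ β) * z k j) / coxS0 z R i β)

/-- The information matrix
`J(β) = (1/n) Σ_{i ∈ D} (S²_i(β)/S⁰_i(β) − (S¹_i(β)/S⁰_i(β))(S¹_i(β)/S⁰_i(β))ᵀ)`. -/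
noncomputable def coxJ {n p : ℕ} (z : Fin n → Fin p → ℝ) (D : Finset (Fin n))
    (R : Fin n → Finset (Fin n)) (β : Fin p → ℝ) : Matrix (Fin p) (Fin p) ℝ :=
  fun a b => (n : ℝ)⁻¹ *
    ∑ i ∈ D,
      ((∑ k ∈ R i, Real.exp (z k ⬝ᵥ β) * z k a * z k b) / coxS0 z R i β -
        ((∑ k ∈ R i, Real.exp (z k ⬝ᵥ β) * z k a) / coxS0 z R i β) *
          ((∑ k ∈ R i, Real.exp (z k ⬝ᵥ β) * z k b) / coxS0 z R i β))

/-- Compatibility factor `κ(T₀; M) = inf_{0 ≠ h ∈ C_{T₀}} √|T₀| (hᵀMh)^{1/2} / ‖h_{T₀}‖₁`. -/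
noncomputable def kappa {p : ℕ} (T0 : Finset (Fin p)) (M : Matrix (Fin p) (Fin p) ℝ) : ℝ :=
  sInf {x | ∃ h : Fin p → ℝ, h ≠ 0 ∧ coneC T0 h ∧
    x = Real.sqrt (T0.card) * Real.sqrt (quad M h) / l1 (restr T0 h)}

/-- Restricted eigenvalue `RE(T₀; M) = inf_{0 ≠ h ∈ C_{T₀}} (hᵀMh)^{1/2} / ‖h‖₂`. -/
noncomputable def RE {p : ℕ} (T0 : Finset (Fin p)) (M : Matrix (Fin p) (Fin p) ℝ) : ℝ :=
  sInf {x | ∃ h : Fin p → ℝ, h ≠ 0 ∧ coneC T0 h ∧ x = Real.sqrt (quad M h) / l2 h}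

/-- Weak cone invertibility factor
`F_q(T₀; M) = inf_{0 ≠ h ∈ C_{T₀}} |T₀|^{1/q} (hᵀMh) / (‖h_{T₀}‖₁ ‖h‖_q)`. -/
noncomputable def Fq {p : ℕ} (q : ℝ) (T0 : Finset (Fin p)) (M : Matrix (Fin p) (Fin p) ℝ) : ℝ :=
  sInf {x | ∃ h : Fin p → ℝ, h ≠ 0 ∧ coneC T0 h ∧
    x = (T0.card : ℝ) ^ (1 / q) * quad M h / (l1 (restr T0 h) * lqNorm q h)}

/-!
Write `h = β̂ - β₀` and `b_k = z_kᵀh`. Since `‖β̂‖₁ ≤ ‖β₀‖₁` and `β₀` vanishes off `T₀`, `h` lies in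
the cone `C_{T₀}`, so `RE² ‖h‖₂² ≤ hᵀJ(β₀)h`. With weights `exp(z_kᵀβ)` on each risk set, `hᵀJ(β)h`
is the average of the weighted variances of `b`, and `hᵀU(β)` the average of `z_iᵀh` minus the
weighted means of `b`. Moving along `β₀ + t h` multiplies the weights by `exp(t b_k)`, so the
derivative of a weighted mean is the weighted variance; and reweighting by factors in
`[e^{-B}, e^{B}]`, where `B = max_k |b_k| ≤ 2K₁‖β₀‖₁`, shrinks a weighted variance by at most
`e^{-2B}`. The mean value theorem thus gives
`hᵀJ(β₀)h ≤ e^{2B} hᵀ(U(β₀) - U(β̂)) ≤ e^{2B} · 2γ‖h‖₁`.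
-/

section WeightedVariance

variable {ι : Type*} (s : Finset ι) (w b : ι → ℝ)

noncomputable def weightedVar : ℝ :=
  s.centerMass w fun k => (b k - s.centerMass w b) ^ 2

theorem sum_mul_sub_sq (a : ℝ) :
    ∑ k ∈ s, w k * (b k - a) ^ 2
      = ∑ k ∈ s, w k * b k ^ 2 - 2 * a * ∑ k ∈ s, w k * b k + a ^ 2 * ∑ k ∈ s, w k := by
  rw [mul_sum, mul_sum, ← sum_sub_distrib, ← sum_add_distrib]
  exact sum_congr rfl fun k _ => by ring

theorem centerMass_eq_div : s.centerMass w b = (∑ k ∈ s, w k * b k) / ∑ k ∈ s, w k := by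
  simp only [centerMass, smul_eq_mul, inv_mul_eq_div]

theorem weightedVar_eq_centerMass_sq_sub :
    weightedVar s w b = s.centerMass w (fun k => b k ^ 2) - s.centerMass w b ^ 2 := by
  rw [weightedVar, centerMass_eq_div, sum_mul_sub_sq, centerMass_eq_div, centerMass_eq_div]
  by_cases hW : ∑ k ∈ s, w k = 0
  · simp [hW]
  · field_simp
    ring

variable {s w b}

theorem sum_mul_sq_sub_centerMass_le (hW : 0 < ∑ k ∈ s, w k) (a : ℝ) :
    ∑ k ∈ s, w k * (b k - s.centerMass w b) ^ 2 ≤ ∑ k ∈ s, w k * (b k - a) ^ 2 := by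
  have key : ∑ k ∈ s, w k * (b k - a) ^ 2
      = ∑ k ∈ s, w k * (b k - s.centerMass w b) ^ 2
        + (s.centerMass w b - a) ^ 2 * ∑ k ∈ s, w k := by
    rw [sum_mul_sub_sq, sum_mul_sub_sq, centerMass_eq_div]
    field_simp
    ring
  rw [key]
  nlinarith [sq_nonneg (s.centerMass w b - a)]

theorem weightedVar_mul_sum (hW : ∑ k ∈ s, w k ≠ 0) :
    weightedVar s w b * ∑ k ∈ s, w k = ∑ k ∈ s, w k * (b k - s.centerMass w b) ^ 2 := by
  rw [weightedVar, centerMass_eq_div _ w]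
  field_simp

theorem weightedVar_nonneg (hw : ∀ k ∈ s, 0 ≤ w k) : 0 ≤ weightedVar s w b := by
  rw [weightedVar, centerMass_eq_div]
  exact div_nonneg (sum_nonneg fun k hk => mul_nonneg (hw k hk) (sq_nonneg _))
    (sum_nonneg hw)

theorem weightedVar_mul_le {r : ι → ℝ} {m M : ℝ} (hw : ∀ k ∈ s, 0 ≤ w k)
    (hW : 0 < ∑ k ∈ s, w k) (hm : 0 < m) (hr : ∀ k ∈ s, m ≤ r k ∧ r k ≤ M) :
    m / M * weightedVar s w b ≤ weightedVar s (fun k => w k * r k) b := by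
  set μ' := s.centerMass (fun k => w k * r k) b
  have hw' : ∀ k ∈ s, m * w k ≤ w k * r k := fun k hk => by nlinarith [hw k hk, hr k hk]
  have hW'_le : ∑ k ∈ s, w k * r k ≤ M * ∑ k ∈ s, w k := by
    rw [mul_sum]
    exact sum_le_sum fun k hk => by nlinarith [hw k hk, hr k hk]
  have hW'_pos : 0 < ∑ k ∈ s, w k * r k :=
    lt_of_lt_of_le (by positivity) ((mul_sum ..).trans_le (sum_le_sum hw'))
  have hM : 0 < M := pos_of_mul_pos_left (hW'_pos.trans_le hW'_le) hW.le
  have hvar : m * (weightedVar s w b * ∑ k ∈ s, w k)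
      ≤ weightedVar s (fun k => w k * r k) b * ∑ k ∈ s, w k * r k := by
    rw [weightedVar_mul_sum hW.ne', weightedVar_mul_sum hW'_pos.ne', mul_sum]
    calc ∑ k ∈ s, m * (w k * (b k - s.centerMass w b) ^ 2)
        ≤ ∑ k ∈ s, m * (w k * (b k - μ') ^ 2) := by
          rw [← mul_sum, ← mul_sum]
          exact mul_le_mul_of_nonneg_left (sum_mul_sq_sub_centerMass_le hW μ') hm.le
      _ ≤ ∑ k ∈ s, w k * r k * (b k - μ') ^ 2 := sum_le_sum fun k hk => by
          rw [← mul_assoc]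
          exact mul_le_mul_of_nonneg_right (hw' k hk) (sq_nonneg _)
  have hV' : 0 ≤ weightedVar s (fun k => w k * r k) b :=
    weightedVar_nonneg fun k hk => by nlinarith [hw' k hk, hw k hk]
  rw [div_mul_eq_mul_div, div_le_iff₀ hM]
  nlinarith [mul_le_mul_of_nonneg_left hW'_le hV']

theorem hasDerivAt_centerMass_exp_mul (t : ℝ)
    (hW : ∑ k ∈ s, w k * Real.exp (t * b k) ≠ 0) :
    HasDerivAt (fun u => s.centerMass (fun k => w k * Real.exp (u * b k)) b)
      (weightedVar s (fun k => w k * Real.exp (t * b k)) b) t := by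
  have hexp : ∀ k, HasDerivAt (fun u => w k * Real.exp (u * b k))
      (w k * Real.exp (t * b k) * b k) t := fun k => by
    simpa [mul_assoc] using (((hasDerivAt_id t).mul_const (b k)).exp).const_mul (w k)
  have hZ := HasDerivAt.fun_sum (u := s) fun k _ => hexp k
  have hN := HasDerivAt.fun_sum (u := s) fun k _ => (hexp k).mul_const (b k)
  have hQ : ∑ k ∈ s, w k * Real.exp (t * b k) * b k * b k
      = ∑ k ∈ s, w k * Real.exp (t * b k) * b k ^ 2 := sum_congr rfl fun k _ => by ring
  rw [funext fun u => centerMass_eq_div s (fun k => w k * Real.exp (u * b k)) b]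
  refine (hN.div hZ hW).congr_deriv ?_
  rw [weightedVar_eq_centerMass_sq_sub, centerMass_eq_div, centerMass_eq_div, hQ]
  field_simp

theorem exp_neg_two_mul_weightedVar_le_centerMass_sub {B : ℝ} (hs : s.Nonempty)
    (hw : ∀ k ∈ s, 0 < w k) (hb : ∀ k ∈ s, |b k| ≤ B) :
    Real.exp (-(2 * B)) * weightedVar s w b
      ≤ s.centerMass (fun k => w k * Real.exp (b k)) b - s.centerMass w b := by
  have hW : ∀ t, 0 < ∑ k ∈ s, w k * Real.exp (t * b k) := fun t =>
    sum_pos (fun k hk => mul_pos (hw k hk) (Real.exp_pos _)) hs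
  obtain ⟨t, ⟨ht0, ht1⟩, hslope⟩ := exists_hasDerivAt_eq_slope
    (fun u => s.centerMass (fun k => w k * Real.exp (u * b k)) b)
    (fun t => weightedVar s (fun k => w k * Real.exp (t * b k)) b) zero_lt_one
    (fun u _ => (hasDerivAt_centerMass_exp_mul u (hW u).ne').continuousAt.continuousWithinAt)
    (fun u _ => hasDerivAt_centerMass_exp_mul u (hW u).ne')
  simp only [zero_mul, Real.exp_zero, mul_one, one_mul, sub_zero, div_one] at hslope
  have htb : ∀ k ∈ s, |t * b k| ≤ B := fun k hk => by
    rw [abs_mul, abs_of_pos ht0]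
    nlinarith [hb k hk, abs_nonneg (b k)]
  have hratio : Real.exp (-(2 * B)) = Real.exp (-B) / Real.exp B := by
    rw [← Real.exp_sub]; ring_nf
  rw [hratio]
  refine (weightedVar_mul_le (fun k hk => (hw k hk).le) (hW 0 |>.trans_eq ?_) (Real.exp_pos _)
    fun k hk => ?_).trans_eq hslope
  · simp
  · exact ⟨Real.exp_le_exp.2 (neg_le_of_abs_le (htb k hk)),
      Real.exp_le_exp.2 (le_of_abs_le (htb k hk))⟩

end WeightedVariance

section Norms

variable {p : ℕ}

theorem l1_nonneg (h : Fin p → ℝ) : 0 ≤ l1 h :=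
  sum_nonneg fun _ _ => abs_nonneg _

theorem l1_sub_le (x y : Fin p → ℝ) : l1 (x - y) ≤ l1 x + l1 y := by
  rw [l1, l1, l1, ← sum_add_distrib]
  exact sum_le_sum fun j _ => abs_sub _ _

theorem l1_restr (T : Finset (Fin p)) (h : Fin p → ℝ) : l1 (restr T h) = ∑ j ∈ T, |h j| := by
  simp only [l1, restr, apply_ite abs, abs_zero, sum_ite_mem, univ_inter]

theorem abs_le_linf (v : Fin p → ℝ) (j : Fin p) : |v j| ≤ linf v :=
  le_ciSup (f := fun j => |v j|) (Set.finite_range _).bddAbove j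

theorem abs_dotProduct_le_mul_l1 {v : Fin p → ℝ} {K : ℝ} (hv : ∀ j, |v j| ≤ K) (h : Fin p → ℝ) :
    |v ⬝ᵥ h| ≤ K * l1 h := by
  rw [l1, mul_sum]
  refine (abs_sum_le_sum_abs _ _).trans (sum_le_sum fun j _ => ?_)
  rw [abs_mul]
  exact mul_le_mul_of_nonneg_right (hv j) (abs_nonneg _)

theorem coneC_sub_of_l1_le {T : Finset (Fin p)} {x y : Fin p → ℝ} (hy : ∀ j ∉ T, y j = 0)
    (hxy : l1 x ≤ l1 y) : coneC T (x - y) := by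
  have hy1 : l1 y = ∑ j ∈ T, |y j| := by
    rw [← l1_restr]
    congr 1
    ext j
    by_cases hj : j ∈ T <;> simp [restr, hj, hy]
  have hx1 : l1 x = ∑ j ∈ T, |x j| + ∑ j ∈ Tᶜ, |x j| := (sum_add_sum_compl T _).symm
  have hoff : ∑ j ∈ Tᶜ, |(x - y) j| = ∑ j ∈ Tᶜ, |x j| :=
    sum_congr rfl fun j hj => by rw [Pi.sub_apply, hy j (mem_compl.1 hj), sub_zero]
  have hon : ∑ j ∈ T, |y j| ≤ ∑ j ∈ T, |x j| + ∑ j ∈ T, |(x - y) j| := by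
    rw [← sum_add_distrib]
    exact sum_le_sum fun j _ => by
      rw [Pi.sub_apply, abs_sub_comm]
      linarith [abs_sub_abs_le_abs_sub (y j) (x j)]
  rw [coneC, l1_restr, l1_restr, hoff]
  linarith

theorem RE_mul_l2_le {T : Finset (Fin p)} (M : Matrix (Fin p) (Fin p) ℝ) {h : Fin p → ℝ}
    (h0 : h ≠ 0) (hT : coneC T h) : RE T M * l2 h ≤ √(quad M h) := by
  have hl2 : 0 < l2 h := by
    obtain ⟨j, hj⟩ := Function.ne_iff.1 h0
    exact Real.sqrt_pos.2 <|
      sum_pos' (fun j _ => sq_nonneg (h j)) ⟨j, mem_univ j, sq_pos_of_ne_zero hj⟩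
  have hbdd : BddBelow {x | ∃ h : Fin p → ℝ, h ≠ 0 ∧ coneC T h ∧ x = √(quad M h) / l2 h} :=
    ⟨0, by rintro _ ⟨h, -, -, rfl⟩; exact div_nonneg (Real.sqrt_nonneg _) (Real.sqrt_nonneg _)⟩
  rw [← le_div_iff₀ hl2]
  exact csInf_le hbdd ⟨h, h0, hT, rfl⟩

end Norms

section QuadraticForm

variable {p : ℕ}

theorem quad_vecMulVec_self (u h : Fin p → ℝ) : quad (vecMulVec u u) h = (u ⬝ᵥ h) ^ 2 := by
  simp [quad, vecMulVec_mulVec, dotProduct_comm h u, sq]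

theorem quad_sum {ι : Type*} (s : Finset ι) (M : ι → Matrix (Fin p) (Fin p) ℝ)
    (h : Fin p → ℝ) :
    quad (∑ i ∈ s, M i) h = ∑ i ∈ s, quad (M i) h := by
  simp [quad, sum_mulVec, dotProduct_sum]

theorem quad_smul (c : ℝ) (M : Matrix (Fin p) (Fin p) ℝ) (h : Fin p → ℝ) :
    quad (c • M) h = c * quad M h := by
  simp [quad, smul_mulVec]

theorem quad_sub (M N : Matrix (Fin p) (Fin p) ℝ) (h : Fin p → ℝ) :
    quad (M - N) h = quad M h - quad N h := by
  simp [quad, sub_mulVec, dotProduct_sub]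

end QuadraticForm

section Cox

variable {n p : ℕ} (z : Fin n → Fin p → ℝ) (D : Finset (Fin n)) (R : Fin n → Finset (Fin n))

theorem coxJ_eq (β : Fin p → ℝ) :
    coxJ z D R β = (n : ℝ)⁻¹ • ∑ i ∈ D,
      ((∑ k ∈ R i, (Real.exp (z k ⬝ᵥ β) / coxS0 z R i β) • vecMulVec (z k) (z k)) -
        vecMulVec (∑ k ∈ R i, (Real.exp (z k ⬝ᵥ β) / coxS0 z R i β) • z k)
          (∑ k ∈ R i, (Real.exp (z k ⬝ᵥ β) / coxS0 z R i β) • z k)) := by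
  ext a b
  simp only [coxJ, Matrix.smul_apply, Matrix.sum_apply, Matrix.sub_apply, vecMulVec_apply,
    Finset.sum_apply, Pi.smul_apply, smul_eq_mul, sum_div]
  congr 1
  refine sum_congr rfl fun i _ => ?_
  congr 1
  · exact sum_congr rfl fun k _ => by ring
  · congr 1 <;> exact sum_congr rfl fun k _ => by ring

theorem quad_coxJ (β h : Fin p → ℝ) :
    quad (coxJ z D R β) h = (n : ℝ)⁻¹ *
      ∑ i ∈ D, weightedVar (R i) (fun k => Real.exp (z k ⬝ᵥ β)) (fun k => z k ⬝ᵥ h) := by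
  simp only [coxJ_eq, quad_smul, quad_sum, quad_sub, quad_vecMulVec_self, sum_dotProduct,
    smul_dotProduct, smul_eq_mul, weightedVar_eq_centerMass_sq_sub, centerMass_eq_div, sum_div]
  congr 1
  refine sum_congr rfl fun i _ => ?_
  rw [coxS0]
  congr 1
  · exact sum_congr rfl fun k _ => by ring
  · congr 1; exact sum_congr rfl fun k _ => by ring

theorem coxU_eq (β : Fin p → ℝ) :
    coxU z D R β =
      (n : ℝ)⁻¹ • ∑ i ∈ D, (z i - (R i).centerMass (fun k => Real.exp (z k ⬝ᵥ β)) z) := by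
  ext j
  simp only [coxU, coxS0, centerMass, Pi.smul_apply, Finset.sum_apply, Pi.sub_apply, smul_eq_mul,
    inv_mul_eq_div]

theorem centerMass_dotProduct {ι : Type*} (s : Finset ι) (w : ι → ℝ) (x : ι → Fin p → ℝ)
    (h : Fin p → ℝ) : s.centerMass w x ⬝ᵥ h = s.centerMass w fun k => x k ⬝ᵥ h := by
  simp only [centerMass, smul_dotProduct, sum_dotProduct]

theorem coxU_dotProduct (β h : Fin p → ℝ) :
    coxU z D R β ⬝ᵥ h = (n : ℝ)⁻¹ * ∑ i ∈ D,
      (z i ⬝ᵥ h - (R i).centerMass (fun k => Real.exp (z k ⬝ᵥ β)) (fun k => z k ⬝ᵥ h)) := by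
  simp only [coxU_eq, smul_dotProduct, sum_dotProduct, sub_dotProduct, centerMass_dotProduct,
    smul_eq_mul]

theorem quad_coxJ_le (hR : ∀ i ∈ D, (R i).Nonempty) {B : ℝ} (β h : Fin p → ℝ)
    (hB : ∀ k, |z k ⬝ᵥ h| ≤ B) :
    quad (coxJ z D R β) h
      ≤ Real.exp (2 * B) * (coxU z D R β ⬝ᵥ h - coxU z D R (β + h) ⬝ᵥ h) := by
  rw [quad_coxJ, coxU_dotProduct, coxU_dotProduct, ← mul_sub, ← sum_sub_distrib, mul_left_comm]
  refine mul_le_mul_of_nonneg_left ?_ (inv_nonneg.2 (Nat.cast_nonneg n))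
  rw [mul_sum]
  refine sum_le_sum fun i hi => ?_
  have hshift : (fun k => Real.exp (z k ⬝ᵥ (β + h)))
      = fun k => Real.exp (z k ⬝ᵥ β) * Real.exp (z k ⬝ᵥ h) := by
    simp only [dotProduct_add, Real.exp_add]
  have := exp_neg_two_mul_weightedVar_le_centerMass_sub (hR i hi)
    (fun k _ => Real.exp_pos (z k ⬝ᵥ β)) fun k _ => hB k
  rw [Real.exp_neg, inv_mul_le_iff₀ (Real.exp_pos _)] at this
  rwa [hshift, sub_sub_sub_cancel_left]

theorem quad_coxJ_le_of_linf_coxU_le (hR : ∀ i ∈ D, (R i).Nonempty) {B γ : ℝ}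
    (β β' : Fin p → ℝ) (hB : ∀ k, |z k ⬝ᵥ (β' - β)| ≤ B)
    (hU : linf (coxU z D R β) ≤ γ) (hU' : linf (coxU z D R β') ≤ γ) :
    quad (coxJ z D R β) (β' - β) ≤ 2 * γ * l1 (β' - β) * Real.exp (2 * B) := by
  have hHolder : ∀ β'', linf (coxU z D R β'') ≤ γ →
      |coxU z D R β'' ⬝ᵥ (β' - β)| ≤ γ * l1 (β' - β) := fun _ hβ'' =>
    abs_dotProduct_le_mul_l1 (fun j => (abs_le_linf _ j).trans hβ'') _
  have hdiff := quad_coxJ_le z D R hR β (β' - β) hB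
  rw [add_sub_cancel] at hdiff
  refine hdiff.trans ?_
  rw [mul_comm]
  refine mul_le_mul_of_nonneg_right ?_ (Real.exp_pos _).le
  linarith [(abs_le.1 (hHolder β hU)).2, (abs_le.1 (hHolder β' hU')).1]

end Cox

theorem stmt8_general {n p : ℕ} (z : Fin n → Fin p → ℝ) (D : Finset (Fin n))
    (R : Fin n → Finset (Fin n)) (hR : ∀ i ∈ D, (R i).Nonempty)
    (K₁ : ℝ) (hz : ∀ i j, |z i j| ≤ K₁)
    (β₀ : Fin p → ℝ) (T0 : Finset (Fin p)) (hT0 : ∀ j, j ∈ T0 ↔ β₀ j ≠ 0)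
    (βhat : Fin p → ℝ) (γ : ℝ) (hγ : 0 ≤ γ)
    (hU0 : linf (coxU z D R β₀) ≤ γ) (hUhat : linf (coxU z D R βhat) ≤ γ)
    (hl1 : l1 βhat ≤ l1 β₀)
    (hRE : 0 < RE T0 (coxJ z D R β₀)) :
    l2 (βhat - β₀) ^ 2 ≤
      4 * γ * l1 β₀ * Real.exp (4 * K₁ * l1 β₀) / RE T0 (coxJ z D R β₀) ^ 2 := by
  set h := βhat - β₀
  have hbound : 0 ≤ 4 * γ * l1 β₀ * Real.exp (4 * K₁ * l1 β₀) := by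
    have := l1_nonneg β₀
    positivity
  by_cases h0 : h = 0
  · rw [h0, l2]
    simpa using div_nonneg hbound (sq_nonneg _)
  obtain ⟨j₀, -⟩ := Function.ne_iff.1 h0
  have hl1h : l1 h ≤ 2 * l1 β₀ := (l1_sub_le _ _).trans (by linarith)
  have hB : ∀ k, |z k ⬝ᵥ h| ≤ 2 * K₁ * l1 β₀ := fun k =>
    (abs_dotProduct_le_mul_l1 (hz k) h).trans
      (by nlinarith [(abs_nonneg _).trans (hz k j₀)])
  have hquad : quad (coxJ z D R β₀) h ≤ 4 * γ * l1 β₀ * Real.exp (4 * K₁ * l1 β₀) := by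
    refine (quad_coxJ_le_of_linf_coxU_le z D R hR β₀ βhat hB hU0 hUhat).trans ?_
    rw [show 2 * (2 * K₁ * l1 β₀) = 4 * K₁ * l1 β₀ by ring]
    exact mul_le_mul_of_nonneg_right (by nlinarith) (Real.exp_pos _).le
  have hcone : coneC T0 h := coneC_sub_of_l1_le (fun j hj => not_not.1 (mt (hT0 j).2 hj)) hl1
  rw [le_div_iff₀ (by positivity), mul_comm, ← mul_pow]
  exact (Real.le_sqrt (mul_nonneg hRE.le (Real.sqrt_nonneg _)) hbound).1
    ((RE_mul_l2_le _ h0 hcone).trans (Real.sqrt_le_sqrt hquad))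

/-- `l₂` bound via the restricted eigenvalue. -/
theorem stmt8 {n p : ℕ} (z : Fin n → Fin p → ℝ) (D : Finset (Fin n))
    (R : Fin n → Finset (Fin n)) (hR : ∀ i ∈ D, (R i).Nonempty)
    (K₁ : ℝ) (hz : ∀ i j, |z i j| ≤ K₁)
    (β₀ : Fin p → ℝ) (T0 : Finset (Fin p)) (hT0 : ∀ j, j ∈ T0 ↔ β₀ j ≠ 0)
    (S : ℕ) (hS : T0.card = S) (hS1 : 1 ≤ S)
    (βhat : Fin p → ℝ) (γ : ℝ) (hγ : 0 ≤ γ)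
    (hU0 : linf (coxU z D R β₀) ≤ γ) (hUhat : linf (coxU z D R βhat) ≤ γ)
    (hl1 : l1 βhat ≤ l1 β₀)
    (hRE : 0 < RE T0 (coxJ z D R β₀)) :
    l2 (βhat - β₀) ^ 2 ≤
      4 * γ * l1 β₀ * Real.exp (4 * K₁ * l1 β₀) / RE T0 (coxJ z D R β₀) ^ 2 :=
  stmt8_general z D R hR K₁ hz β₀ T0 hT0 βhat γ hγ hU0 hUhat hl1 hRE
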